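/- arXiv:1204.3747 — 5 statements merged into one kernel-verified Lean document; each statement's English description precedes it below -/
import Mathlib

section
/- For coprime positive integers r < s, the numerical semigroup generated by r and s has exactly (r-1)(s-1)/2 gaps (positive integers not in the semigroup). -/
/-!
Put `c = (r - 1) * (s - 1)`. Every `n ≥ c` lies in `⟨r, s⟩`, and for `n < c` exactly one of `n`
and `c - 1 - n` does. Both cannot: adding the two representations would write `r * s` as
`a * r + b * s` with `a, b ≥ 1`, which coprimality forbids. If `n` is a gap, write
`n = a * r - k * s` with `a < s` and `k ≥ 1` (Chinese remainder theorem); then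
`c - 1 - n = (s - 1 - a) * r + (k - 1) * s`. Hence `n ↦ c - 1 - n` exchanges the gaps with the
elements of `⟨r, s⟩` below `c`, and there are `c / 2` gaps.
-/

open Finset

namespace Nat.Coprime

variable {p q n m : ℕ}

theorem not_exists_mul_add_mul_eq_and (hpq : p.Coprime q) (h : n + m + p + q = p * q) :
    ¬ ((∃ a b, a * p + b * q = n) ∧ ∃ c d, c * p + d * q = m) := by
  rintro ⟨⟨a, b, rfl⟩, c, d, rfl⟩
  exact hpq.mul_add_mul_ne_mul (add_one_ne_zero (a + c)) (add_one_ne_zero (b + d))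
    (by rw [← h]; ring)

theorem exists_mul_add_mul_eq_of_not (hpq : p.Coprime q) (h : n + m + p + q = p * q)
    (hn : ¬ ∃ a b, a * p + b * q = n) : ∃ c d, c * p + d * q = m := by
  have hp : p ≠ 0 := by rintro rfl; simp_all
  have hq : q ≠ 0 := by rintro rfl; simp_all
  obtain ⟨k, hkpq, hkp, hkn⟩ : ∃ k < p * q, k ≡ 0 [MOD p] ∧ k ≡ n [MOD q] :=
    ⟨_, Nat.chineseRemainder_lt_mul hpq 0 n hp hq, (Nat.chineseRemainder hpq 0 n).2⟩
  obtain ⟨a, rfl⟩ : p ∣ k := Nat.modEq_zero_iff_dvd.mp hkp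
  have ha : a < q := by nlinarith [Nat.pos_of_ne_zero hp]
  have hnk : n < p * a := by
    by_contra! hle
    obtain ⟨b, hb⟩ := (Nat.modEq_iff_dvd' hle).mp hkn
    exact hn ⟨a, b, by rw [mul_comm a, mul_comm b]; omega⟩
  obtain ⟨e, he⟩ := (Nat.modEq_iff_dvd' hnk.le).mp hkn.symm
  replace he : p * a = n + q * e := by omega
  have he0 : 0 < e := Nat.pos_of_ne_zero (by rintro rfl; omega)
  obtain ⟨d, rfl⟩ := Nat.exists_eq_add_of_lt ha
  obtain ⟨e, rfl⟩ := Nat.exists_eq_add_of_lt he0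
  exact ⟨d, e, by linarith⟩

theorem exists_mul_add_mul_eq_iff_not (hpq : p.Coprime q) (h : n + m + p + q = p * q) :
    (∃ c d, c * p + d * q = m) ↔ ¬ ∃ a b, a * p + b * q = n :=
  ⟨fun hm hn => hpq.not_exists_mul_add_mul_eq_and h ⟨hn, hm⟩,
    hpq.exists_mul_add_mul_eq_of_not h⟩

open Classical in
theorem setOf_pos_and_not_exists_mul_add_mul_eq (hpq : p.Coprime q) :
    {n | 0 < n ∧ ¬ ∃ a b, a * p + b * q = n} =
      ↑{n ∈ range ((p - 1) * (q - 1)) | ¬ ∃ a b, a * p + b * q = n} := by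
  ext n
  simp only [Set.mem_ofPred_eq, coe_filter, mem_range]
  refine ⟨fun ⟨_, hn⟩ => ⟨?_, hn⟩, fun ⟨_, hn⟩ => ⟨?_, hn⟩⟩
  · by_contra! hle
    exact hn (Nat.exists_add_mul_eq_of_gcd_dvd_of_mul_pred_le p q n (by simp [hpq.gcd_eq_one]) hle)
  · exact Nat.pos_of_ne_zero (by rintro rfl; exact hn ⟨0, 0, by simp⟩)

theorem exists_mul_add_mul_eq_reflect_iff (hpq : p.Coprime q) (hn : n < (p - 1) * (q - 1)) :
    (∃ c d, c * p + d * q = (p - 1) * (q - 1) - 1 - n) ↔ ¬ ∃ a b, a * p + b * q = n := by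
  refine hpq.exists_mul_add_mul_eq_iff_not ?_
  obtain ⟨p, rfl⟩ : ∃ p', p = p' + 1 := Nat.exists_eq_succ_of_ne_zero (by rintro rfl; simp at hn)
  obtain ⟨q, rfl⟩ : ∃ q', q = q' + 1 := Nat.exists_eq_succ_of_ne_zero (by rintro rfl; simp at hn)
  simp only [Nat.add_sub_cancel] at hn ⊢
  have : n + (p * q - 1 - n) + 1 = p * q := by omega
  linarith

end Nat.Coprime

theorem Finset.two_mul_card_filter_not_range {N : ℕ} {P : ℕ → Prop} [DecidablePred P]
    (h : ∀ n < N, P (N - 1 - n) ↔ ¬ P n) : 2 * #{n ∈ range N | ¬ P n} = N := by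
  have hreflect : #{n ∈ range N | ¬ P n} = #{n ∈ range N | P n} := by
    refine card_nbij' (N - 1 - ·) (N - 1 - ·) ?_ ?_ ?_ ?_ <;> intro n hn <;>
      simp only [coe_filter, mem_range, Set.mem_ofPred_eq] at hn ⊢
    · exact ⟨by omega, (h n hn.1).2 hn.2⟩
    · exact ⟨by omega, fun hP => (h n hn.1).1 hP hn.2⟩
    all_goals omega
  have := card_filter_add_card_filter_not (s := range N) P
  rw [card_range] at this
  linarith

theorem numerical_semigroup_gap_count_general (r s : ℕ) (hco : Nat.Coprime r s) :
    {n : ℕ | 0 < n ∧ ¬ ∃ a b : ℕ, a * r + b * s = n}.ncard = (r - 1) * (s - 1) / 2 := by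
  classical
  rw [hco.setOf_pos_and_not_exists_mul_add_mul_eq, Set.ncard_coe_finset]
  have := two_mul_card_filter_not_range (P := fun n => ∃ a b, a * r + b * s = n)
    fun _ => hco.exists_mul_add_mul_eq_reflect_iff
  omega

/-- For coprime positive integers `r < s`, the numerical semigroup generated by
`r` and `s` has exactly `(r-1)*(s-1)/2` gaps. -/
theorem numerical_semigroup_gap_count (r s : ℕ) (hr : 1 < r) (hrs : r < s)
    (hco : Nat.Coprime r s) :
    {n : ℕ | 0 < n ∧ ¬ ∃ a b : ℕ, a * r + b * s = n}.ncard = (r - 1) * (s - 1) / 2 :=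
  numerical_semigroup_gap_count_general r s hco
end

section
/- For coprime r < s with g = (r-1)(s-1)/2, define a partition Λ by Λ_i = g - N(i-1) + (i-1) for 1 ≤ i ≤ g, where N is the increasing enumeration of the semigroup ⟨r,s⟩. Then Λ_1 ≥ Λ_2 ≥ ... ≥ Λ_g ≥ 0, i.e., Λ is a genuine (weakly decreasing) partition. -/
/-!
Write `c = (r - 1)(s - 1) = 2g`. Every `n` has a representation `n = a r + b s` with `a ∈ ℤ` and
`0 ≤ b < r`, and `n ∈ ⟨r, s⟩` iff `a ≥ 0`. Comparing the representations of `n` and of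
`c - 1 - n = r s - r - s - n` shows that at least one of the two lies in `⟨r, s⟩`, so at least
half of `0, …, c - 1` lie in `⟨r, s⟩`, i.e. `N (g - 1) < 2g`, which is `Λ g ≥ 0`.
Monotonicity of `Λ` is just `N i ≥ N (i - 1) + 1`.
-/

open Finset

def pairSemigroup (r s : ℕ) : Set ℕ := {n | ∃ a b : ℕ, a * r + b * s = n}

theorem pairSemigroup_infinite {r : ℕ} (hr : 0 < r) (s : ℕ) : (pairSemigroup r s).Infinite :=
  Set.infinite_of_injective_forall_mem (f := (· * r)) (mul_left_injective₀ hr.ne')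
    fun k => ⟨k, 0, by simp⟩

theorem exists_int_mul_add_mul_of_coprime {r s : ℕ} (hco : r.Coprime s) (hr : r ≠ 0) (n : ℕ) :
    ∃ a : ℤ, ∃ b : ℕ, b < r ∧ (n : ℤ) = a * r + b * s := by
  have hbezout : (1 : ℤ) = r * r.gcdA s + s * r.gcdB s := by
    rw [← Nat.gcd_eq_gcd_ab, hco, Nat.cast_one]
  have hr' : (0 : ℤ) < r := by omega
  set y : ℤ := n * r.gcdB s
  have hy := Int.emod_lt_of_pos y hr'
  refine ⟨n * r.gcdA s + y / r * s, (y % r).toNat, by omega, ?_⟩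
  rw [Int.toNat_of_nonneg (Int.emod_nonneg y hr'.ne')]
  linear_combination (n : ℤ) * hbezout - s * Int.mul_ediv_add_emod y r

theorem mem_pairSemigroup_or_mem_of_add_add_add_eq_mul {r s : ℕ} (hco : r.Coprime s) {n m : ℕ}
    (h : n + m + r + s = r * s) : n ∈ pairSemigroup r s ∨ m ∈ pairSemigroup r s := by
  have hr : r ≠ 0 := by
    rintro rfl
    simp_all
  obtain ⟨a, b, hb, hn⟩ := exists_int_mul_add_mul_of_coprime hco hr n
  rcases le_or_gt 0 a with ha | ha
  · exact Or.inl ⟨a.toNat, b, by zify; rw [Int.toNat_of_nonneg ha]; linarith⟩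
  · refine Or.inr ⟨(-a - 1).toNat, r - 1 - b, ?_⟩
    have h' : (n : ℤ) + m + r + s = r * s := by exact_mod_cast h
    zify [(by omega : b ≤ r - 1), (by omega : 1 ≤ r)]
    rw [Int.toNat_of_nonneg (by omega)]
    linear_combination hn - h'

theorem Nat.le_two_mul_count_of_forall_or {p : ℕ → Prop} [DecidablePred p] {c : ℕ}
    (h : ∀ n < c, p n ∨ p (c - 1 - n)) : c ≤ 2 * Nat.count p c := by
  rw [Nat.count_eq_card_filter_range, two_mul]
  calc c = #(range c) := (card_range c).symm
    _ ≤ #({n ∈ range c | p n} ∪ {n ∈ range c | p n}.image (c - 1 - ·)) := by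
        refine card_le_card fun n hn => ?_
        rw [mem_range] at hn
        rcases h n hn with hp | hp
        · exact mem_union_left _ (mem_filter.2 ⟨mem_range.2 hn, hp⟩)
        · refine mem_union_right _ (mem_image.2 ⟨c - 1 - n, ?_, by omega⟩)
          exact mem_filter.2 ⟨mem_range.2 (by omega), hp⟩
    _ ≤ _ := (card_union_le _ _).trans (Nat.add_le_add_left Finset.card_image_le _)

theorem pred_mul_pred_le_two_mul_count_pairSemigroup {r s : ℕ} (hco : r.Coprime s)
    [DecidablePred (· ∈ pairSemigroup r s)] :
    (r - 1) * (s - 1) ≤ 2 * Nat.count (· ∈ pairSemigroup r s) ((r - 1) * (s - 1)) := by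
  refine Nat.le_two_mul_count_of_forall_or fun n hn => ?_
  obtain _ | k := r
  · simp at hn
  obtain _ | l := s
  · simp at hn
  refine mem_pairSemigroup_or_mem_of_add_add_add_eq_mul hco ?_
  simp only [Nat.add_sub_cancel] at hn ⊢
  have : (k + 1) * (l + 1) = k * l + k + l + 1 := by ring
  omega

theorem Nat.Coprime.even_pred_mul_pred {r s : ℕ} (hco : r.Coprime s) :
    Even ((r - 1) * (s - 1)) := by
  rcases Nat.even_or_odd r with hr | hr
  · exact (Nat.Odd.sub_odd (hco.coprime_dvd_left hr.two_dvd).odd_of_left odd_one).mul_left _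
  · exact (Nat.Odd.sub_odd hr odd_one).mul_right _

theorem semigroup_partition_is_partition_general (r s : ℕ) (hr : 1 < r)
    (hco : Nat.Coprime r s) (g : ℕ) (hg : g = (r - 1) * (s - 1) / 2)
    (N : ℕ → ℕ) (hN : N = Nat.nth (fun n => ∃ a b : ℕ, a * r + b * s = n))
    (Λ : ℕ → ℤ) (hΛ : ∀ i : ℕ, Λ i = (g : ℤ) - (N (i - 1) : ℤ) + ((i : ℤ) - 1)) :
    (∀ i : ℕ, 1 ≤ i → i < g → Λ (i + 1) ≤ Λ i) ∧ (1 ≤ g → 0 ≤ Λ g) := by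
  classical
  replace hN : N = Nat.nth (· ∈ pairSemigroup r s) := hN
  have h2g : (r - 1) * (s - 1) = 2 * g := by
    rw [hg, Nat.mul_div_cancel' hco.even_pred_mul_pred.two_dvd]
  refine ⟨fun i hi _ => ?_, fun hg1 => ?_⟩
  · have hlt : N (i - 1) < N i :=
      hN ▸ Nat.nth_strictMono (pairSemigroup_infinite (by omega) s) (by omega)
    rw [hΛ, hΛ, Nat.add_sub_cancel]
    push_cast
    omega
  · have hcount := pred_mul_pred_le_two_mul_count_pairSemigroup hco
    rw [h2g] at hcount
    have hlt : N (g - 1) < 2 * g := hN ▸ Nat.nth_lt_of_lt_count (by omega)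
    rw [hΛ]
    omega

/-- The sequence `Λ i = g - N(i-1) + (i-1)` (for `1 ≤ i ≤ g`) attached to the
numerical semigroup `⟨r,s⟩` is weakly decreasing with nonnegative parts,
i.e. it is a genuine partition. -/
theorem semigroup_partition_is_partition (r s : ℕ) (hr : 1 < r) (hrs : r < s)
    (hco : Nat.Coprime r s) (g : ℕ) (hg : g = (r - 1) * (s - 1) / 2)
    (N : ℕ → ℕ) (hN : N = Nat.nth (fun n => ∃ a b : ℕ, a * r + b * s = n))
    (Λ : ℕ → ℤ) (hΛ : ∀ i : ℕ, Λ i = (g : ℤ) - (N (i - 1) : ℤ) + ((i : ℤ) - 1)) :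
    (∀ i : ℕ, 1 ≤ i → i < g → Λ (i + 1) ≤ Λ i) ∧ (1 ≤ g → 0 ≤ Λ g) :=
  semigroup_partition_is_partition_general r s hr hco g hg N hN Λ hΛ
end

section
/- For coprime r < s, the total size of the partition Λ attached to the (r,s) numerical semigroup satisfies |Λ| = Σ_{i=1}^{g} Λ_i = (r² - 1)(s² - 1)/24, where g = (r-1)(s-1)/2 and Λ_i = g - N(i-1) + (i-1). -/
open Finset

private lemma sps_sum_id (n : ℕ) : 2 * ∑ b ∈ range n, (b : ℤ) = n * (n - 1) := by
  induction n with
  | zero => simp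
  | succ k ih => rw [sum_range_succ]; push_cast; push_cast at ih; ring_nf; ring_nf at ih; linarith

private lemma sps_sum_sq (n : ℕ) : 6 * ∑ b ∈ range n, (b : ℤ) ^ 2 = n * (n - 1) * (2 * n - 1) := by
  induction n with
  | zero => simp
  | succ k ih => rw [sum_range_succ]; push_cast; push_cast at ih; ring_nf; ring_nf at ih; linarith

private lemma sps_sum_Icc (m : ℕ) : 2 * ∑ j ∈ Icc 1 m, (j : ℤ) = m * (m + 1) := by
  induction m with
  | zero => simp
  | succ k ih =>
      rw [Finset.sum_Icc_succ_top (by omega)]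
      push_cast; push_cast at ih; ring_nf; ring_nf at ih; linarith

private lemma sps_rep_exists {r s : ℕ} (hr : 0 < r) (hco : Nat.Coprime r s) (n : ℕ) :
    ∃ b : ℕ, b < r ∧ (r : ℤ) ∣ (n : ℤ) - b * s := by
  haveI : NeZero r := ⟨hr.ne'⟩
  have hs : IsUnit (s : ZMod r) := (ZMod.isUnit_iff_coprime s r).mpr hco.symm
  refine ⟨((n : ZMod r) * ↑hs.unit⁻¹).val, ZMod.val_lt _, ?_⟩
  have h1 : ((((n : ZMod r) * ↑hs.unit⁻¹).val * s : ℕ) : ZMod r) = (n : ZMod r) := by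
    push_cast
    rw [ZMod.natCast_val, ZMod.cast_id]
    rw [mul_assoc, IsUnit.val_inv_mul]
    ring
  have h2 : (((n : ZMod r) * ↑hs.unit⁻¹).val * s) ≡ n [MOD r] :=
    (ZMod.natCast_eq_natCast_iff _ _ _).mp h1
  have := h2.dvd
  push_cast at this
  omega

private lemma sps_inner {r s : ℕ} (b : ℕ) :
    2 * (r:ℤ) * ∑ j ∈ Icc 1 (b * s / r), ((b * s - r * j : ℕ) : ℤ)
      = (b:ℤ)^2 * s^2 - ((b * s % r : ℕ) : ℤ)^2 - r * ((b:ℤ) * s - ((b * s % r : ℕ) : ℤ)) := by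
  set m := b * s / r with hm
  set c := b * s % r with hc
  have hbc : r * m + c = b * s := Nat.div_add_mod (b * s) r
  have hZ : (b : ℤ) * s = r * m + c := by exact_mod_cast hbc.symm
  have hstep : ∑ j ∈ Icc 1 m, ((b * s - r * j : ℕ) : ℤ)
      = (m : ℤ) * ((b:ℤ) * s) - r * ∑ j ∈ Icc 1 m, (j : ℤ) := by
    rw [show ∑ j ∈ Icc 1 m, ((b * s - r * j : ℕ) : ℤ) = ∑ j ∈ Icc 1 m, ((b:ℤ) * s - r * j) from
      Finset.sum_congr rfl fun j hj => by
        have hj' : j ≤ m := (Finset.mem_Icc.mp hj).2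
        have hle : r * j ≤ b * s := le_trans (Nat.mul_le_mul_left r hj') (by omega)
        push_cast [hle]; ring]
    rw [Finset.sum_sub_distrib, Finset.sum_const, Nat.card_Icc, Finset.mul_sum]
    rw [← Finset.mul_sum]
    simp only [Nat.add_sub_cancel, nsmul_eq_mul]
  rw [hstep]
  have hT := sps_sum_Icc m
  linear_combination ((r:ℤ) * m + r - c - (b:ℤ) * s) * hZ - (r:ℤ)^2 * hT



private lemma sps_mem_iff {r s : ℕ} (hr : 0 < r) (hco : Nat.Coprime r s) {n b : ℕ}
    (hb : b < r) (hd : (r : ℤ) ∣ (n : ℤ) - b * s) :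
    (∃ a c : ℕ, a * r + c * s = n) ↔ b * s ≤ n := by
  have hcoZ : IsCoprime (r : ℤ) (s : ℤ) := Nat.isCoprime_iff_coprime.mpr hco
  constructor
  · rintro ⟨a, c, rfl⟩
    have h1 : (r : ℤ) ∣ ((c : ℤ) - b) * s := by
      obtain ⟨k, hk⟩ := hd
      exact ⟨k - a, by push_cast at hk ⊢; linarith⟩
    have h2 : (r : ℤ) ∣ ((c : ℤ) - b) := hcoZ.dvd_of_dvd_mul_right h1
    have hbc : (b : ℤ) ≤ c := by
      by_contra hlt
      push_neg at hlt
      have h3 : (r : ℤ) ∣ ((b : ℤ) - c) := by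
        have := h2.neg_right
        rwa [neg_sub] at this
      have h4 : (r : ℤ) ≤ (b : ℤ) - c := Int.le_of_dvd (by omega) h3
      omega
    have : b * s ≤ c * s := Nat.mul_le_mul_right s (by exact_mod_cast hbc)
    omega
  · intro h
    obtain ⟨k, hk⟩ := hd
    have hk0 : 0 ≤ k := by
      rcases le_or_gt 0 k with h' | h'
      · exact h'
      · exfalso; nlinarith [hk, (show (b*s:ℤ) ≤ n by exact_mod_cast h), (show (0:ℤ) < r by exact_mod_cast hr)]
    refine ⟨k.toNat, b, ?_⟩
    have hcast : ((k.toNat * r + b * s : ℕ) : ℤ) = n := by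
      push_cast [Int.toNat_of_nonneg hk0]
      linarith
    exact_mod_cast hcast


private lemma sps_perm_sum {r s : ℕ} (hr : 0 < r) (hco : Nat.Coprime r s) (f : ℕ → ℤ) :
    ∑ b ∈ range r, f (b * s % r) = ∑ b ∈ range r, f b := by
  have hinj : Set.InjOn (fun b => b * s % r) (range r) := by
    intro a ha b hb hab
    simp only [mem_coe, mem_range] at ha hb
    simp only at hab
    have hco' : IsCoprime (r : ℤ) (s : ℤ) := Nat.isCoprime_iff_coprime.mpr hco
    have h1 : (a * s) ≡ (b * s) [MOD r] := hab
    have h2 : (r : ℤ) ∣ ((b : ℤ) - a) * s := by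
      have := h1.dvd
      push_cast at this
      obtain ⟨k, hk⟩ := this
      exact ⟨k, by linarith⟩
    have h3 : (r : ℤ) ∣ ((b : ℤ) - a) := hco'.dvd_of_dvd_mul_right h2
    rcases lt_trichotomy a b with h | h | h
    · have : (r : ℤ) ≤ (b : ℤ) - a := Int.le_of_dvd (by omega) h3
      omega
    · exact h
    · have h5 : (r : ℤ) ∣ ((a : ℤ) - b) := by
        have := h3.neg_right; rwa [neg_sub] at this
      have : (r : ℤ) ≤ (a : ℤ) - b := Int.le_of_dvd (by omega) h5
      omega
  have himg : (range r).image (fun b => b * s % r) = range r := by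
    apply Finset.eq_of_subset_of_card_le
    · intro x hx
      simp only [mem_image, mem_range] at hx ⊢
      obtain ⟨b, _, rfl⟩ := hx
      exact Nat.mod_lt _ hr
    · rw [Finset.card_image_of_injOn hinj]
  calc ∑ b ∈ range r, f (b * s % r) = ∑ x ∈ (range r).image (fun b => b * s % r), f x :=
        (Finset.sum_image (fun a ha b hb h => hinj ha hb h)).symm
    _ = ∑ b ∈ range r, f b := by rw [himg]
private lemma sps_sylvester {r s F : ℕ} (hr : 1 < r) (hs : 1 < s) (hco : Nat.Coprime r s)
    (hF : F + r + s = r * s) {n : ℕ} (hn : n ≤ F) :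
    (∃ a c : ℕ, a * r + c * s = n) ↔ ¬ (∃ a c : ℕ, a * r + c * s = F - n) := by
  have hr0 : 0 < r := by omega
  obtain ⟨b, hb, hd⟩ := sps_rep_exists hr0 hco n
  have hb' : r - 1 - b < r := by omega
  have hFZ : (F : ℤ) = r * s - r - s := by
    have h : (F : ℤ) + r + s = (r:ℤ) * s := by exact_mod_cast hF
    linarith
  obtain ⟨k, hk⟩ := hd
  have hd' : (r : ℤ) ∣ ((F - n : ℕ) : ℤ) - ((r - 1 - b : ℕ) : ℤ) * s := by
    refine ⟨-k - 1, ?_⟩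
    have c1 : ((F - n : ℕ) : ℤ) = (F : ℤ) - n := by
      have := hn; push_cast [this]; ring
    have c2 : ((r - 1 - b : ℕ) : ℤ) = (r : ℤ) - 1 - b := by
      have h1 : b ≤ r - 1 := by omega
      have h2 : 1 ≤ r := by omega
      push_cast [h1, h2]; ring
    rw [c1, c2, hFZ]; linarith
  rw [sps_mem_iff hr0 hco hb ⟨k, hk⟩, sps_mem_iff hr0 hco hb' hd']
  have hsZ : (0:ℤ) < s := by exact_mod_cast (by omega : 0 < s)
  have hbs : b * s ≤ n ↔ 0 ≤ k := by
    constructor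
    · intro h
      have : (b * s : ℤ) ≤ n := by exact_mod_cast h
      nlinarith [hk, (show (0:ℤ) < r by exact_mod_cast hr0)]
    · intro h
      have : (b * s : ℤ) ≤ n := by nlinarith [hk, (show (0:ℤ) < r by exact_mod_cast hr0)]
      exact_mod_cast this
  have hbs' : (r - 1 - b) * s ≤ F - n ↔ k ≤ -1 := by
    have c2 : (((r - 1 - b) * s : ℕ) : ℤ) = ((r : ℤ) - 1 - b) * s := by
      have h1 : b ≤ r - 1 := by omega
      have h2 : 1 ≤ r := by omega
      push_cast [h1, h2]; ring
    have c1 : ((F - n : ℕ) : ℤ) = (F : ℤ) - n := by push_cast [hn]; ring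
    rw [← Nat.cast_le (α := ℤ), c1, c2, hFZ]
    constructor
    · intro h
      nlinarith [hk, (show (0:ℤ) < r by exact_mod_cast hr0)]
    · intro h
      nlinarith [hk, (show (0:ℤ) < r by exact_mod_cast hr0)]
  rw [hbs, hbs']
  omega

private lemma sps_rep_unique {r s : ℕ} (hr : 0 < r) (hco : Nat.Coprime r s) {b b' : ℕ}
    (hb : b < r) (hb' : b' < r) (h : (r:ℤ) ∣ ((b:ℤ) - b') * s) : b = b' := by
  have hco' : IsCoprime (r : ℤ) (s : ℤ) := Nat.isCoprime_iff_coprime.mpr hco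
  have h3 := hco'.dvd_of_dvd_mul_right h
  rcases lt_trichotomy b b' with h' | h' | h'
  · have h5 : (r:ℤ) ∣ ((b':ℤ) - b) := by
      have := h3.neg_right; rwa [neg_sub] at this
    have := Int.le_of_dvd (by omega) h5; omega
  · exact h'
  · have := Int.le_of_dvd (by omega) h3; omega

set_option maxHeartbeats 1600000 in
/-- The total size of the partition `Λ` attached to the `(r,s)` numerical
semigroup is `|Λ| = Σ_{i=1}^{g} Λ_i = (r² - 1)(s² - 1)/24`. -/
theorem semigroup_partition_total_size (r s : ℕ) (hr : 1 < r) (hrs : r < s)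
    (hco : Nat.Coprime r s) (g : ℕ) (hg : g = (r - 1) * (s - 1) / 2)
    (N : ℕ → ℕ) (hN : N = Nat.nth (fun n => ∃ a b : ℕ, a * r + b * s = n))
    (Λ : ℕ → ℤ) (hΛ : ∀ i : ℕ, Λ i = (g : ℤ) - (N (i - 1) : ℤ) + ((i : ℤ) - 1)) :
    (∑ i ∈ Finset.Icc 1 g, Λ i) * 24 = ((r : ℤ) ^ 2 - 1) * ((s : ℤ) ^ 2 - 1) := by
  classical
  have hs : 1 < s := lt_trans hr hrs
  have hr0 : 0 < r := by omega
  have hrs_le : r + s ≤ r * s := by nlinarith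
  set P : ℕ → Prop := (fun n => ∃ a b : ℕ, a * r + b * s = n) with hPdef
  set F : ℕ := r * s - r - s with hFdef
  have hF : F + r + s = r * s := by omega
  -- parity facts
  have h2co : ¬ (2 ∣ r ∧ 2 ∣ s) := by
    rintro ⟨ha, hb⟩
    have h3 : (2:ℕ) ∣ 1 := hco ▸ Nat.dvd_gcd ha hb
    omega
  have hdvd : 2 ∣ (r - 1) * (s - 1) := by
    rcases Nat.even_or_odd r with he | ho
    · have h4 : ¬ 2 ∣ s := fun h => h2co ⟨he.two_dvd, h⟩
      exact Dvd.dvd.mul_left (by omega) _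
    · have h4 : ¬ 2 ∣ r := by
        intro h; rcases ho with ⟨m, hm⟩; omega
      exact Dvd.dvd.mul_right (by omega) _
  have h2g : 2 * g = (r - 1) * (s - 1) := by rw [hg, Nat.mul_div_cancel' hdvd]
  have hF1 : F + 1 = 2 * g := by
    have h : (r - 1) * (s - 1) + r + s = r * s + 1 := by
      zify [show 1 ≤ r by omega, show 1 ≤ s by omega]; ring
    omega
  -- the semigroup is infinite
  have hinf : (setOf P).Infinite :=
    Set.infinite_of_injective_forall_mem (f := fun k : ℕ => k * r)
      (mul_left_injective₀ (by omega : r ≠ 0)) (fun k => ⟨k, 0, by ring⟩)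
  -- counting: exactly g elements of the semigroup in [0, F]
  have hbijc : #{n ∈ range (F+1) | P n} = #{n ∈ range (F+1) | ¬ P n} := by
    apply Finset.card_bij' (i := fun n _ => F - n) (j := fun n _ => F - n)
    · intro a ha
      rw [Finset.mem_filter, Finset.mem_range] at ha ⊢
      refine ⟨by omega, (sps_sylvester hr hs hco hF (by omega : a ≤ F)).mp ha.2⟩
    · intro a ha
      rw [Finset.mem_filter, Finset.mem_range] at ha ⊢
      have hsyl := sps_sylvester hr hs hco hF (show F - a ≤ F by omega)
      rw [show F - (F - a) = a by omega] at hsyl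
      exact ⟨by omega, hsyl.mpr ha.2⟩
    · intro a ha; rw [Finset.mem_filter, Finset.mem_range] at ha; omega
    · intro a ha; rw [Finset.mem_filter, Finset.mem_range] at ha; omega
  have htot : #{n ∈ range (F+1) | P n} + #{n ∈ range (F+1) | ¬ P n} = F + 1 := by
    have h := Finset.card_filter_add_card_filter_not (s := range (F+1)) (p := P)
    rwa [Finset.card_range] at h
  have hxg : #{n ∈ range (F+1) | P n} = g := by linarith
  have hcount : Nat.count P (F+1) = g := by
    rw [Nat.count_eq_card_filter_range]; exact hxg
  -- sum of the first g semigroup elements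
  have hsumN : ∑ i ∈ range g, ((N i : ℕ) : ℤ) = ∑ n ∈ {n ∈ range (F+1) | P n}, (n : ℤ) := by
    apply Finset.sum_bij (i := fun i _ => N i)
    · intro a ha
      rw [Finset.mem_range] at ha
      rw [Finset.mem_filter, Finset.mem_range]
      constructor
      · rw [hN]; exact Nat.nth_lt_of_lt_count (by rw [hcount]; exact ha)
      · rw [hN]; exact Nat.nth_mem_of_infinite hinf a
    · intro a ha b hb hab
      rw [hN] at hab
      exact Nat.nth_injective hinf hab
    · intro n hn
      rw [Finset.mem_filter, Finset.mem_range] at hn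
      refine ⟨Nat.count P n, Finset.mem_range.mpr ?_, ?_⟩
      · have h1 : Nat.count P (n+1) ≤ Nat.count P (F+1) := Nat.count_monotone P (by omega)
        have h2 : Nat.count P (n+1) = Nat.count P n + 1 := by
          rw [Nat.count_succ, if_pos hn.2]
        rw [← hcount]; linarith
      · rw [hN]; exact Nat.nth_count hn.2
    · intro a ha; rfl
  -- sum of gaps via explicit parametrization
  have hgapsum : ∑ x ∈ (range r).sigma (fun b => Icc 1 (b * s / r)), ((x.1 * s - r * x.2 : ℕ) : ℤ)
      = ∑ n ∈ {n ∈ range (F+1) | ¬ P n}, (n : ℤ) := by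
    apply Finset.sum_bij (i := fun x _ => x.1 * s - r * x.2)
    · rintro ⟨b, j⟩ hx
      simp only [Finset.mem_sigma, Finset.mem_range, Finset.mem_Icc] at hx
      obtain ⟨hb, hj1, hj2⟩ : b < r ∧ 1 ≤ j ∧ j ≤ b * s / r := hx
      have h1 : r * j ≤ b * s := le_trans (Nat.mul_le_mul_left r hj2)
        (by rw [mul_comm]; exact Nat.div_mul_le_self (b*s) r)
      have h2 : b * s + s ≤ r * s := by
        have h5 := Nat.mul_le_mul_right s (show b + 1 ≤ r by omega)
        rwa [add_mul, one_mul] at h5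
      have h3 : r ≤ r * j := Nat.le_mul_of_pos_right r (by omega)
      rw [Finset.mem_filter, Finset.mem_range]
      constructor
      · generalize hBB : b * s = B at h1 h2 ⊢
        generalize hJJ : r * j = J at h1 h3 ⊢
        generalize hRR : r * s = R at h2 hF ⊢
        omega
      · have hd : (r:ℤ) ∣ ((b * s - r * j : ℕ) : ℤ) - b * s :=
          ⟨-(j:ℤ), by push_cast [h1]; ring⟩
        show ¬ (∃ a c : ℕ, a * r + c * s = b * s - r * j)
        rw [sps_mem_iff hr0 hco hb hd]
        generalize hBB : b * s = B at h1 ⊢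
        generalize hJJ : r * j = J at h1 h3 ⊢
        omega
    · rintro ⟨b, j⟩ hx ⟨b', j'⟩ hx' h
      simp only [Finset.mem_sigma, Finset.mem_range, Finset.mem_Icc] at hx hx'
      have h1 : r * j ≤ b * s := le_trans (Nat.mul_le_mul_left r hx.2.2)
        (by rw [mul_comm]; exact Nat.div_mul_le_self (b*s) r)
      have h1' : r * j' ≤ b' * s := le_trans (Nat.mul_le_mul_left r hx'.2.2)
        (by rw [mul_comm]; exact Nat.div_mul_le_self (b'*s) r)
      have hZ : (b:ℤ) * s - r * j = (b':ℤ) * s - r * j' := by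
        have h6 : ((b * s - r * j : ℕ) : ℤ) = ((b' * s - r * j' : ℕ) : ℤ) := by
          exact_mod_cast congrArg (fun x : ℕ => (x:ℤ)) h
        push_cast [h1, h1'] at h6; linarith
      have hd : (r:ℤ) ∣ ((b:ℤ) - b') * s := ⟨(j:ℤ) - j', by linear_combination hZ⟩
      have hbb : b = b' := sps_rep_unique hr0 hco hx.1 hx'.1 hd
      subst hbb
      have hj : j = j' := by
        have h7 : (j:ℤ) = j' := by
          have h8 : (r:ℤ) * j = r * j' := by linarith
          exact mul_left_cancel₀ (by exact_mod_cast hr0.ne' : (r:ℤ) ≠ 0) h8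
        exact_mod_cast h7
      simp [hj]
    · intro n hn
      rw [Finset.mem_filter, Finset.mem_range] at hn
      obtain ⟨hnF, hnP⟩ := hn
      obtain ⟨b, hb, hd⟩ := sps_rep_exists hr0 hco n
      have hmem := sps_mem_iff hr0 hco hb hd
      have hnb : ¬ b * s ≤ n := fun h => hnP (hmem.mpr h)
      obtain ⟨k, hk⟩ := hd
      have hnbZ : (n : ℤ) < (b:ℤ) * s := by
        have : n < b * s := by omega
        exact_mod_cast this
      have hrZ : (0:ℤ) < r := by exact_mod_cast hr0
      have hkneg : k ≤ -1 := by nlinarith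
      have hjk : (((-k).toNat : ℕ) : ℤ) = -k := Int.toNat_of_nonneg (by omega)
      set j := (-k).toNat with hjdef
      have hrj : (r:ℤ) * j = (b:ℤ) * s - n := by rw [hjk]; linarith
      have hrjn : r * j ≤ b * s := by
        have h9 : ((r * j : ℕ) : ℤ) ≤ ((b * s : ℕ) : ℤ) := by push_cast; linarith [hrj, Int.natCast_nonneg n]
        exact_mod_cast h9
      have hj1 : 1 ≤ j := by
        have h11 : (1:ℤ) ≤ (j:ℤ) := by rw [hjk]; omega
        exact_mod_cast h11
      refine ⟨⟨b, j⟩, ?_, ?_⟩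
      · rw [Finset.mem_sigma, Finset.mem_range, Finset.mem_Icc]
        refine ⟨hb, hj1, ?_⟩
        rw [Nat.le_div_iff_mul_le hr0]
        have h9 : ((j * r : ℕ) : ℤ) ≤ ((b * s : ℕ) : ℤ) := by push_cast; linarith [hrj, Int.natCast_nonneg n]
        exact_mod_cast h9
      · have h10 : ((b * s - r * j : ℕ) : ℤ) = n := by push_cast [hrjn]; linarith [hrj]
        exact_mod_cast h10
    · rintro ⟨b, j⟩ ha; rfl
  -- closed form for the sum of gaps
  have hsig : ∑ x ∈ (range r).sigma (fun b => Icc 1 (b * s / r)), ((x.1 * s - r * x.2 : ℕ) : ℤ)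
      = ∑ b ∈ range r, ∑ j ∈ Icc 1 (b * s / r), ((b * s - r * j : ℕ) : ℤ) :=
    Finset.sum_sigma _ _ _
  have hG : ∑ n ∈ {n ∈ range (F+1) | ¬ P n}, (n : ℤ)
      = ∑ b ∈ range r, ∑ j ∈ Icc 1 (b * s / r), ((b * s - r * j : ℕ) : ℤ) := by
    rw [← hgapsum, hsig]
  have h2r : 2 * (r:ℤ) * ∑ n ∈ {n ∈ range (F+1) | ¬ P n}, (n : ℤ)
      = ∑ b ∈ range r, ((b:ℤ)^2 * s^2 - ((b * s % r : ℕ) : ℤ)^2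
          - r * ((b:ℤ) * s - ((b * s % r : ℕ) : ℤ))) := by
    rw [hG, Finset.mul_sum]
    exact Finset.sum_congr rfl fun b _ => sps_inner b
  have hA' : ∑ b ∈ range r, ((b * s % r : ℕ) : ℤ) = ∑ b ∈ range r, (b : ℤ) :=
    sps_perm_sum hr0 hco (fun x : ℕ => (x:ℤ))
  have hB' : ∑ b ∈ range r, ((b * s % r : ℕ) : ℤ)^2 = ∑ b ∈ range r, (b : ℤ)^2 :=
    sps_perm_sum hr0 hco (fun x : ℕ => (x:ℤ)^2)
  have hsplitsum : ∑ b ∈ range r, ((b:ℤ)^2 * s^2 - ((b * s % r : ℕ) : ℤ)^2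
          - r * ((b:ℤ) * s - ((b * s % r : ℕ) : ℤ)))
      = (s:ℤ)^2 * (∑ b ∈ range r, (b:ℤ)^2) - (∑ b ∈ range r, ((b * s % r : ℕ) : ℤ)^2)
        - (r:ℤ) * s * (∑ b ∈ range r, (b:ℤ)) + (r:ℤ) * (∑ b ∈ range r, ((b * s % r : ℕ) : ℤ)) := by
    rw [Finset.mul_sum, Finset.mul_sum, Finset.mul_sum, ← Finset.sum_sub_distrib,
      ← Finset.sum_sub_distrib, ← Finset.sum_add_distrib]
    exact Finset.sum_congr rfl fun b _ => by ring
  have hA := sps_sum_id r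
  have hB := sps_sum_sq r
  have hkey : (r:ℤ) * (12 * ∑ n ∈ {n ∈ range (F+1) | ¬ P n}, (n : ℤ))
      = (r:ℤ) * (((r:ℤ)-1) * ((s:ℤ)-1) * (2*(r:ℤ)*s - r - s - 1)) := by
    linear_combination 6 * h2r + 6 * hsplitsum - 6 * hB' + 6 * (r:ℤ) * hA'
      + ((s:ℤ)^2-1) * hB - 3 * (r:ℤ) * ((s:ℤ)-1) * hA
  have hSG12 : 12 * ∑ n ∈ {n ∈ range (F+1) | ¬ P n}, (n : ℤ)
      = ((r:ℤ)-1) * ((s:ℤ)-1) * (2*(r:ℤ)*s - r - s - 1) :=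
    mul_left_cancel₀ (by exact_mod_cast hr0.ne' : (r:ℤ) ≠ 0) hkey
  -- total sum over [0, F]
  have hTot : 2 * ∑ n ∈ range (F+1), (n:ℤ) = ((F:ℤ)+1) * (F:ℤ) := by
    have h := sps_sum_id (F+1)
    push_cast at h
    linear_combination h
  have hsplit2 : (∑ n ∈ {n ∈ range (F+1) | P n}, (n:ℤ))
      + (∑ n ∈ {n ∈ range (F+1) | ¬ P n}, (n:ℤ)) = ∑ n ∈ range (F+1), (n:ℤ) :=
    Finset.sum_filter_add_sum_filter_not _ _ _
  -- rewrite the left-hand side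
  have hIcc : ∑ i ∈ Icc 1 g, Λ i = ∑ j ∈ range g, ((g:ℤ) - ((N j : ℕ) : ℤ) + (j : ℤ)) := by
    apply Finset.sum_nbij' (i := fun n => n - 1) (j := fun n => n + 1)
    · intro a ha; rw [Finset.mem_Icc] at ha; rw [Finset.mem_range]; omega
    · intro a ha; rw [Finset.mem_range] at ha; rw [Finset.mem_Icc]; omega
    · intro a ha; rw [Finset.mem_Icc] at ha; omega
    · intro a ha; omega
    · intro a ha
      rw [Finset.mem_Icc] at ha
      rw [hΛ a]
      have hc : (((a - 1 : ℕ)) : ℤ) = (a:ℤ) - 1 := by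
        push_cast [show 1 ≤ a by omega]; ring
      rw [hc]
  have hLam : ∑ j ∈ range g, ((g:ℤ) - ((N j : ℕ) : ℤ) + (j : ℤ))
      = (g:ℤ) * g - (∑ i ∈ range g, ((N i : ℕ) : ℤ)) + ∑ j ∈ range g, (j:ℤ) := by
    rw [Finset.sum_add_distrib, Finset.sum_sub_distrib, Finset.sum_const, Finset.card_range,
      nsmul_eq_mul]
  have hTg := sps_sum_id g
  have hgF : (F:ℤ) + 1 = 2 * (g:ℤ) := by exact_mod_cast hF1
  have hgm : 2 * (g:ℤ) = ((r:ℤ)-1) * ((s:ℤ)-1) := by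
    zify [show 1 ≤ r by omega, show 1 ≤ s by omega] at h2g
    linarith
  rw [hIcc, hLam]
  linear_combination 12 * hTg - 24 * hsumN - 24 * hsplit2 - 12 * hTot + 2 * hSG12
    - 12 * ((F:ℤ) + 2 * (g:ℤ)) * hgF
    + (6 - 3 * (2 * (g:ℤ) + ((r:ℤ)-1) * ((s:ℤ)-1))) * hgm
end

section
/- For coprime r < s with partition Λ (Λ_i = g - N(i-1) + (i-1)), the hook length of the node (1,i) in the first row of the Young diagram of Λ equals Λ_i + g - i = 2g - N(i-1) - 1. -/
open Finset

/-- Canonical residue characterization of representability. -/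
private lemma hook_rep_char {r s : ℕ} (hr : 0 < r) (hs : 1 < s) (hco : Nat.Coprime r s)
    (n : ℕ) : ∃ a : ℕ, a < s ∧ a * r ≡ n [MOD s] ∧
      ((∃ x y : ℕ, x * r + y * s = n) ↔ a * r ≤ n) := by
  haveI : NeZero s := ⟨by omega⟩
  set u : ZMod s := (n : ZMod s) * (r : ZMod s)⁻¹ with hu
  have hunit : IsUnit (r : ZMod s) := (ZMod.isUnit_iff_coprime r s).mpr hco
  have hmod : u.val * r ≡ n [MOD s] := by
    have h1 : ((u.val * r : ℕ) : ZMod s) = (n : ZMod s) := by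
      push_cast
      rw [ZMod.natCast_zmod_val, hu, mul_assoc, ZMod.inv_mul_of_unit _ hunit, mul_one]
    exact (ZMod.natCast_eq_natCast_iff _ _ _).mp h1
  refine ⟨u.val, ZMod.val_lt u, hmod, ?_, ?_⟩
  · rintro ⟨x, y, hxy⟩
    have hx : x * r ≡ n [MOD s] := by
      have h2 : x * r + y * s ≡ x * r + 0 [MOD s] :=
        Nat.ModEq.add_left _ (Nat.modEq_zero_iff_dvd.mpr (dvd_mul_left s y))
      rw [hxy, add_zero] at h2
      exact h2.symm
    have hux : u.val ≡ x [MOD s] :=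
      Nat.ModEq.cancel_right_of_coprime
        (by simpa [Nat.Coprime, Nat.gcd_comm] using hco) (hmod.trans hx.symm)
    have hle : u.val ≤ x := by
      calc u.val = u.val % s := (Nat.mod_eq_of_lt (ZMod.val_lt u)).symm
        _ = x % s := hux
        _ ≤ x := Nat.mod_le x s
    calc u.val * r ≤ x * r := Nat.mul_le_mul_right r hle
      _ ≤ x * r + y * s := Nat.le_add_right _ _
      _ = n := hxy
  · intro hle
    obtain ⟨y, hy⟩ := (Nat.modEq_iff_dvd' hle).mp hmod
    exact ⟨u.val, y, by have := mul_comm s y; omega⟩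

/-- Symmetry of the numerical semigroup ⟨r,s⟩. -/
private lemma hook_symm {r s : ℕ} (hr : 1 < r) (hrs : r < s) (hco : Nat.Coprime r s)
    {m n : ℕ} (h : m + n + r + s = r * s) :
    (∃ x y : ℕ, x * r + y * s = m) ↔ ¬ (∃ x y : ℕ, x * r + y * s = n) := by
  have hs : 1 < s := lt_trans hr hrs
  obtain ⟨a, ha, hamod, harep⟩ := hook_rep_char (by omega) hs hco m
  obtain ⟨b, hb, hbmod, hbrep⟩ := hook_rep_char (by omega) hs hco n
  have hsr : s * r = r * s := mul_comm s r
  have hsum : m + n + s = (s - 1) * r := by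
    rw [tsub_mul, one_mul]; omega
  have habmod : (a + b) * r ≡ (s - 1) * r [MOD s] := by
    have h1 : a * r + b * r ≡ m + n [MOD s] := hamod.add hbmod
    have h2 : m + n ≡ m + n + s [MOD s] := (Nat.ModEq.refl _).trans
      (by unfold Nat.ModEq; rw [Nat.add_mod_right])
    rw [add_mul]
    exact (h1.trans h2).trans (by rw [hsum])
  have hab : a + b ≡ s - 1 [MOD s] :=
    Nat.ModEq.cancel_right_of_coprime
      (by simpa [Nat.Coprime, Nat.gcd_comm] using hco) habmod
  have habe : a + b = s - 1 := by
    rcases le_or_gt (s - 1) (a + b) with hge | hlt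
    · by_contra hne
      have hpos : 0 < a + b - (s - 1) := by omega
      have := Nat.le_of_dvd hpos ((Nat.modEq_iff_dvd' hge).mp hab.symm)
      omega
    · have hpos : 0 < (s - 1) - (a + b) := by omega
      have := Nat.le_of_dvd hpos ((Nat.modEq_iff_dvd' (le_of_lt hlt)).mp hab)
      omega
  have habr : a * r + b * r = m + n + s := by
    have h3 : a * r + b * r = (s - 1) * r := by rw [← add_mul, habe]
    omega
  rw [harep, hbrep]
  constructor
  · intro h1 h2; omega
  · intro h1
    have hbn : n < b * r := by omega
    have h4 : s ≤ b * r - n :=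
      Nat.le_of_dvd (by omega) ((Nat.modEq_iff_dvd' (le_of_lt hbn)).mp hbmod.symm)
    omega

private lemma hook_prod {r s : ℕ} (hr : 1 < r) (hrs : r < s) :
    (r - 1) * (s - 1) + r + s = r * s + 1 := by
  obtain ⟨a, ha⟩ := Nat.exists_eq_add_of_lt hr
  obtain ⟨b, hb⟩ := Nat.exists_eq_add_of_lt (lt_trans hr hrs)
  subst ha hb
  have e1 : 1 + a + 1 - 1 = a + 1 := by omega
  have e2 : 1 + b + 1 - 1 = b + 1 := by omega
  rw [e1, e2]; ring

private lemma hook_symm2 {r s g : ℕ} (hr : 1 < r) (hrs : r < s) (hco : Nat.Coprime r s)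
    (h2g : 2 * g = (r - 1) * (s - 1)) {m n : ℕ} (hmn : m + n + 1 = 2 * g) :
    (∃ x y : ℕ, x * r + y * s = m) ↔ ¬ (∃ x y : ℕ, x * r + y * s = n) := by
  apply hook_symm hr hrs hco
  have := hook_prod hr hrs
  omega

private lemma hook_big {r s g : ℕ} (hr : 1 < r) (hrs : r < s) (hco : Nat.Coprime r s)
    (h2g : 2 * g = (r - 1) * (s - 1)) {n : ℕ} (hn : 2 * g ≤ n) :
    ∃ x y : ℕ, x * r + y * s = n := by
  obtain ⟨a, ha, hamod, harep⟩ := hook_rep_char (by omega) (by omega) hco n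
  rw [harep]
  by_contra hlt
  push_neg at hlt
  have h4 : s ≤ a * r - n :=
    Nat.le_of_dvd (by omega) ((Nat.modEq_iff_dvd' hlt.le).mp hamod.symm)
  have h5 : a * r ≤ (s - 1) * r := Nat.mul_le_mul_right r (by omega)
  have h6 : (s - 1) * r = s * r - r := by rw [tsub_mul, one_mul]
  have h7 := hook_prod hr hrs
  have h8 : s * r = r * s := mul_comm s r
  omega

private lemma hook_count {r s g : ℕ} (hr : 1 < r) (hrs : r < s) (hco : Nat.Coprime r s)
    (h2g : 2 * g = (r - 1) * (s - 1))
    [DecidablePred fun n => ∃ x y : ℕ, x * r + y * s = n] :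
    Nat.count (fun n => ∃ x y : ℕ, x * r + y * s = n) (2 * g) = g := by
  rw [Nat.count_eq_card_filter_range]
  have hcard : (Finset.filter (fun x => ∃ x₁ y : ℕ, x₁ * r + y * s = x)
        (Finset.range (2 * g))).card
      = (Finset.filter (fun x => ¬ ∃ x₁ y : ℕ, x₁ * r + y * s = x)
        (Finset.range (2 * g))).card := by
    apply Finset.card_bij' (fun n _ => 2 * g - 1 - n) (fun n _ => 2 * g - 1 - n)
    · intro a ha
      simp only [Finset.mem_filter, Finset.mem_range] at ha ⊢
      refine ⟨by omega, ?_⟩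
      exact (hook_symm2 hr hrs hco h2g (by omega)).mp ha.2
    · intro a ha
      simp only [Finset.mem_filter, Finset.mem_range] at ha ⊢
      refine ⟨by omega, ?_⟩
      exact (hook_symm2 hr hrs hco h2g (m := 2 * g - 1 - a) (n := a) (by omega)).mpr ha.2
    · intro a ha
      simp only [Finset.mem_filter, Finset.mem_range] at ha
      omega
    · intro a ha
      simp only [Finset.mem_filter, Finset.mem_range] at ha
      omega
  have htot := Finset.card_filter_add_card_filter_not
    (s := Finset.range (2 * g)) (fun x => ∃ x₁ y : ℕ, x₁ * r + y * s = x)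
  rw [Finset.card_range] at htot
  omega

/-- The hook length of the node `(1,i)` of the Young diagram of the partition
`Λ` attached to an `(r,s)` numerical semigroup equals
`Λ_i + g - i = 2g - N(i-1) - 1`.  Here the hook length of `(1,i)` is
`Λ_1 - i + Λ'_i` where `Λ'_i = #{j : Λ_j ≥ i}` is the column length at `i`. -/
theorem hook_length_first_row (r s : ℕ) (hr : 1 < r) (hrs : r < s)
    (hco : Nat.Coprime r s) (g : ℕ) (hg : g = (r - 1) * (s - 1) / 2)
    (N : ℕ → ℕ) (hN : N = Nat.nth (fun n => ∃ a b : ℕ, a * r + b * s = n))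
    (Λ : ℕ → ℤ) (hΛ : ∀ i : ℕ, Λ i = (g : ℤ) - (N (i - 1) : ℤ) + ((i : ℤ) - 1))
    (col : ℕ → ℕ)
    (hcol : ∀ i : ℕ, col i = ((Finset.Icc 1 g).filter (fun j => (i : ℤ) ≤ Λ j)).card) :
    ∀ i : ℕ, 1 ≤ i → i ≤ g →
      Λ 1 - (i : ℤ) + (col i : ℤ) = Λ i + (g : ℤ) - (i : ℤ) ∧
      Λ i + (g : ℤ) - (i : ℤ) = 2 * (g : ℤ) - (N (i - 1) : ℤ) - 1 := by
  classical
  intro i hi1 hig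
  have hs : 1 < s := lt_trans hr hrs
  have hg1 : 1 ≤ g := le_trans hi1 hig
  -- 2g = (r-1)(s-1)
  have h2g : 2 * g = (r - 1) * (s - 1) := by
    have heven : Even ((r - 1) * (s - 1)) := by
      rcases Nat.even_or_odd r with he | ho
      · have hso : Odd s := by
          rcases Nat.even_or_odd s with hse | hso
          · exfalso
            have h2 : 2 ∣ Nat.gcd r s := Nat.dvd_gcd he.two_dvd hse.two_dvd
            rw [Nat.Coprime] at hco
            rw [hco] at h2
            omega
          · exact hso
        exact Even.mul_left (Nat.Odd.sub_odd hso odd_one) _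
      · exact Even.mul_right (Nat.Odd.sub_odd ho odd_one) _
    obtain ⟨k, hk⟩ := heven
    omega
  have hinf : (setOf fun n => ∃ a b : ℕ, a * r + b * s = n).Infinite := by
    apply Set.infinite_of_injective_forall_mem (f := fun t : ℕ => t * s)
    · intro a b hab
      exact Nat.eq_of_mul_eq_mul_right (by omega) hab
    · intro t
      exact ⟨0, t, by simp⟩
  have hcnt : Nat.count (fun n => ∃ a b : ℕ, a * r + b * s = n) (2 * g) = g :=
    hook_count hr hrs hco h2g
  have hmem : ∀ k : ℕ, ∃ a b : ℕ, a * r + b * s = N k := by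
    intro k; rw [hN]; exact Nat.nth_mem_of_infinite hinf k
  have hcm : ∀ m : ℕ, Nat.count (fun n => ∃ a b : ℕ, a * r + b * s = n) (N m) = m := by
    intro m; rw [hN]; exact Nat.count_nth_of_infinite hinf m
  have hNklt : N (i - 1) < 2 * g := by
    rw [hN]
    exact (Nat.lt_nth_iff_count_lt hinf).mp (by rw [hcnt]; omega)
  obtain ⟨x, hx⟩ : ∃ x : ℕ, x + N (i - 1) + 1 = 2 * g := ⟨2 * g - 1 - N (i - 1), by omega⟩
  have hnpx : ¬ ∃ a b : ℕ, a * r + b * s = x :=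
    (hook_symm2 hr hrs hco h2g (m := N (i - 1)) (n := x) (by omega)).mp (hmem _)
  -- count of gaps + count of elements = n
  have hsplit : ∀ n : ℕ, Nat.count (fun m => ∃ a b : ℕ, a * r + b * s = m) n
      + Nat.count (fun m => ¬ ∃ a b : ℕ, a * r + b * s = m) n = n := by
    intro n
    induction n with
    | zero => simp
    | succ n ih =>
      rw [Nat.count_succ, Nat.count_succ]
      by_cases h : ∃ a b : ℕ, a * r + b * s = n
      · rw [if_pos h, if_neg (not_not_intro h)]; omega
      · rw [if_neg h, if_pos h]; omega
  have hqmono := Nat.count_monotone (fun m => ¬ ∃ a b : ℕ, a * r + b * s = m)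
  -- count of gaps below x is g - i
  have hqx : Nat.count (fun m => ¬ ∃ a b : ℕ, a * r + b * s = m) x + i = g := by
    have hT : (Finset.filter (fun z => (∃ a b : ℕ, a * r + b * s = z) ∧ N (i - 1) < z)
        (Finset.range (2 * g))).card + i = g := by
      have hsub : Finset.filter (fun z => ∃ a b : ℕ, a * r + b * s = z)
            (Finset.range (N (i - 1) + 1))
          ⊆ Finset.filter (fun z => ∃ a b : ℕ, a * r + b * s = z) (Finset.range (2 * g)) :=
        Finset.filter_subset_filter _ (Finset.range_subset_range.mpr (by omega))
      have hsd : Finset.filter (fun z => (∃ a b : ℕ, a * r + b * s = z) ∧ N (i - 1) < z)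
            (Finset.range (2 * g))
          = Finset.filter (fun z => ∃ a b : ℕ, a * r + b * s = z) (Finset.range (2 * g))
            \ Finset.filter (fun z => ∃ a b : ℕ, a * r + b * s = z)
              (Finset.range (N (i - 1) + 1)) := by
        ext z
        simp only [Finset.mem_filter, Finset.mem_sdiff, Finset.mem_range]
        constructor
        · rintro ⟨h1, h2, h3⟩
          exact ⟨⟨h1, h2⟩, fun hc => by omega⟩
        · rintro ⟨⟨h1, h2⟩, h3⟩
          refine ⟨h1, h2, ?_⟩
          by_contra h4
          exact h3 ⟨by omega, h2⟩
      rw [hsd, Finset.card_sdiff_of_subset hsub]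
      have e1 : (Finset.filter (fun z => ∃ a b : ℕ, a * r + b * s = z)
          (Finset.range (2 * g))).card = g := by
        rw [← Nat.count_eq_card_filter_range]; exact hcnt
      have e2 : (Finset.filter (fun z => ∃ a b : ℕ, a * r + b * s = z)
          (Finset.range (N (i - 1) + 1))).card = i := by
        rw [← Nat.count_eq_card_filter_range, hN]
        rw [Nat.count_nth_succ_of_infinite hinf (i - 1)]
        omega
      rw [e1, e2]
      omega
    have hbij : (Finset.filter (fun m => ¬ ∃ a b : ℕ, a * r + b * s = m)
        (Finset.range x)).card
        = (Finset.filter (fun z => (∃ a b : ℕ, a * r + b * s = z) ∧ N (i - 1) < z)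
          (Finset.range (2 * g))).card := by
      apply Finset.card_bij' (fun y _ => 2 * g - 1 - y) (fun z _ => 2 * g - 1 - z)
      · intro y hy
        simp only [Finset.mem_filter, Finset.mem_range] at hy ⊢
        refine ⟨by omega, ?_, by omega⟩
        exact (hook_symm2 hr hrs hco h2g (m := 2 * g - 1 - y) (n := y) (by omega)).mpr hy.2
      · intro z hz
        simp only [Finset.mem_filter, Finset.mem_range] at hz ⊢
        refine ⟨by omega, ?_⟩
        exact (hook_symm2 hr hrs hco h2g (m := z) (n := 2 * g - 1 - z) (by omega)).mp hz.2.1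
      · intro y hy
        simp only [Finset.mem_filter, Finset.mem_range] at hy
        omega
      · intro z hz
        simp only [Finset.mem_filter, Finset.mem_range] at hz
        omega
    rw [Nat.count_eq_card_filter_range]
    omega
  -- the key equivalence
  have hiff : ∀ m : ℕ, m < g → (N m + i ≤ g + m ↔ N m ≤ x) := by
    intro m hm
    constructor
    · intro h
      by_contra hc
      push_neg at hc
      have h1 : Nat.count (fun m => ¬ ∃ a b : ℕ, a * r + b * s = m) (x + 1)
          ≤ Nat.count (fun m => ¬ ∃ a b : ℕ, a * r + b * s = m) (N m) := hqmono (by omega)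
      have h2 : Nat.count (fun m => ¬ ∃ a b : ℕ, a * r + b * s = m) (x + 1)
          = Nat.count (fun m => ¬ ∃ a b : ℕ, a * r + b * s = m) x + 1 := by
        rw [Nat.count_succ, if_pos hnpx]
      have h3 := hsplit (N m)
      have h4 := hcm m
      omega
    · intro h
      have h1 : Nat.count (fun m => ¬ ∃ a b : ℕ, a * r + b * s = m) (N m)
          ≤ Nat.count (fun m => ¬ ∃ a b : ℕ, a * r + b * s = m) x := hqmono h
      have h3 := hsplit (N m)
      have h4 := hcm m
      omega
  -- rewrite col
  have hcol1 : col i = (Finset.filter (fun m => N m ≤ x) (Finset.range g)).card := by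
    rw [hcol i]
    have hstep : ∀ j ∈ Finset.Icc 1 g, ((i : ℤ) ≤ Λ j ↔ N (j - 1) ≤ x) := by
      intro j hj
      rw [Finset.mem_Icc] at hj
      rw [hΛ j]
      have hj1 : ((j : ℤ) - 1) = ((j - 1 : ℕ) : ℤ) := by omega
      rw [hj1]
      have hiffj := hiff (j - 1) (by omega)
      constructor
      · intro hle
        exact hiffj.mp (by omega)
      · intro hle
        have h5 := hiffj.mpr hle
        omega
    rw [Finset.filter_congr hstep]
    refine Finset.card_bij' (fun j _ => j - 1) (fun m _ => m + 1) ?_ ?_ ?_ ?_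
    · intro a ha
      simp only [Finset.mem_filter, Finset.mem_Icc, Finset.mem_range] at ha ⊢
      exact ⟨by omega, ha.2⟩
    · intro a ha
      simp only [Finset.mem_filter, Finset.mem_Icc, Finset.mem_range] at ha ⊢
      refine ⟨by omega, ?_⟩
      simpa using ha.2
    · intro a ha
      simp only [Finset.mem_filter, Finset.mem_Icc] at ha
      show a - 1 + 1 = a
      omega
    · intro a ha
      show a + 1 - 1 = a
      omega
  have hfin : Finset.filter (fun m => N m ≤ x) (Finset.range g)
      = Finset.range (Nat.count (fun n => ∃ a b : ℕ, a * r + b * s = n) (x + 1)) := by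
    have hcle : Nat.count (fun n => ∃ a b : ℕ, a * r + b * s = n) (x + 1) ≤ g := by
      have := Nat.count_monotone (fun n => ∃ a b : ℕ, a * r + b * s = n)
        (show x + 1 ≤ 2 * g by omega)
      omega
    ext m
    simp only [Finset.mem_filter, Finset.mem_range]
    constructor
    · rintro ⟨h1, h2⟩
      apply (Nat.lt_nth_iff_count_lt hinf).mpr
      rw [hN] at h2
      omega
    · intro h1
      refine ⟨by omega, ?_⟩
      have h2 := (Nat.lt_nth_iff_count_lt hinf).mp h1
      rw [← hN] at h2
      omega
  have hcount1 : Nat.count (fun n => ∃ a b : ℕ, a * r + b * s = n) (x + 1)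
      = Nat.count (fun n => ∃ a b : ℕ, a * r + b * s = n) x := by
    rw [Nat.count_succ, if_neg hnpx]
    omega
  have hcolv : col i + N (i - 1) + 1 = g + i := by
    have e1 : col i = Nat.count (fun n => ∃ a b : ℕ, a * r + b * s = n) (x + 1) := by
      rw [hcol1, hfin, Finset.card_range]
    have e2 := hsplit x
    omega
  have hN0 : N 0 = 0 := by
    have hp0 : ∃ a b : ℕ, a * r + b * s = 0 := ⟨0, 0, by simp⟩
    have h6 := Nat.nth_count (p := fun n => ∃ a b : ℕ, a * r + b * s = n) hp0
    rw [Nat.count_zero] at h6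
    rw [hN]
    exact h6
  refine ⟨?_, ?_⟩
  · rw [hΛ 1, hΛ i, show (1 : ℕ) - 1 = 0 from rfl, hN0]
    push_cast
    omega
  · rw [hΛ i]
    ring
end

section
/- The partition Λ attached to the (r,s) numerical semigroup is self-conjugate: its Frobenius characteristics satisfy a_i = b_i for all i (equivalently, Λ equals its transpose partition). -/
/-!
Put `F = r s - r - s`. Writing an integer as `a r + b s` with `0 ≤ a < s`, exactly one of `n` and
`F - n` lies in `⟨r, s⟩`, so `m ↦ F - m` exchanges the elements and the gaps in `[0, F]`; in
particular there are `g = (F + 1) / 2` gaps. The part `Λ_i` is the number of gaps above the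
`i`-th element `n_i` of the semigroup, so `Λ'_j` is the number of elements below the `j`-th
largest gap `F - n_j`, which by the reflection is the number of gaps above `n_j`, i.e. `Λ_j`.
-/

open Finset

namespace Nat

lemma count_reflect (q : ℕ → Prop) [DecidablePred q] (n : ℕ) :
    count (fun k => q (n - 1 - k)) n = count q n := by
  simp only [count_eq_card_filter_range, card_filter]
  exact sum_range_reflect (fun k => if q k then 1 else 0) n

lemma count_not_add_count (q : ℕ → Prop) [DecidablePred q] (n : ℕ) :
    count (fun k => ¬ q k) n + count q n = n := by
  simp only [count_eq_card_filter_range]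
  rw [add_comm, card_filter_add_card_filter_not, card_range]

end Nat

def IsSymmetricBelow (p : ℕ → Prop) (c : ℕ) : Prop :=
  ∀ m < c, p m ↔ ¬ p (c - 1 - m)

namespace IsSymmetricBelow

variable {p : ℕ → Prop} [DecidablePred p]

lemma count_add_count {c : ℕ} (hp : IsSymmetricBelow p c) {n : ℕ} (hn : n ≤ c) :
    Nat.count p c + Nat.count p n = Nat.count p (c - n) + n := by
  have hsplit : Nat.count p c = Nat.count p (c - n) + Nat.count (fun k => p (c - n + k)) n := by
    rw [← Nat.count_add, Nat.sub_add_cancel hn]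
  have htop : Nat.count (fun k => p (c - n + k)) n = Nat.count (fun k => ¬ p k) n := by
    rw [← Nat.count_reflect (fun k => ¬ p k), Nat.count_eq_card_filter_range,
      Nat.count_eq_card_filter_range]
    refine congrArg card (filter_congr fun k hk => ?_)
    rw [mem_range] at hk
    rw [hp _ (by omega), show c - 1 - (c - n + k) = n - 1 - k by omega]
  have := Nat.count_not_add_count p n
  omega

lemma count_two_mul {g : ℕ} (hp : IsSymmetricBelow p (2 * g)) : Nat.count p (2 * g) = g := by
  have := hp.count_add_count le_rfl
  rw [Nat.sub_self, Nat.count_zero] at this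
  omega

variable {g : ℕ} (hp : IsSymmetricBelow p (2 * g)) (hinf : {n | p n}.Infinite)
include hp hinf

lemma count_sub_nth_add_nth {k : ℕ} (hk : k < g) :
    Nat.count p (2 * g - Nat.nth p k) + Nat.nth p k = g + k := by
  have hlt : Nat.nth p k < 2 * g :=
    (Nat.lt_nth_iff_count_lt hinf).1 (by rw [hp.count_two_mul]; exact hk)
  have := hp.count_add_count hlt.le
  rw [hp.count_two_mul, Nat.count_nth_of_infinite hinf] at this
  omega

lemma nth_le_add {k : ℕ} (hk : k < g) : Nat.nth p k ≤ g + k := by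
  have := hp.count_sub_nth_add_nth hinf hk
  omega

lemma add_nth_lt_iff {k l : ℕ} (hk : k < g) :
    l + Nat.nth p k < g + k ↔ Nat.nth p k + Nat.nth p l < 2 * g := by
  have hcount := hp.count_sub_nth_add_nth hinf hk
  have hgc : l < Nat.count p (2 * g - Nat.nth p k) ↔ Nat.nth p l < 2 * g - Nat.nth p k :=
    Nat.lt_nth_iff_count_lt hinf
  omega

lemma add_nth_lt_comm {k l : ℕ} (hk : k < g) (hl : l < g) :
    l + Nat.nth p k < g + k ↔ k + Nat.nth p l < g + l := by
  rw [hp.add_nth_lt_iff hinf hk, hp.add_nth_lt_iff hinf hl, add_comm]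

end IsSymmetricBelow

namespace Nat.Coprime

variable {r s : ℕ}

lemma even_sub_one_mul_sub_one (hco : r.Coprime s) : Even ((r - 1) * (s - 1)) := by
  rw [Nat.even_mul, Nat.even_iff, Nat.even_iff]
  by_contra! hodd
  exact Nat.not_coprime_of_dvd_of_dvd one_lt_two (by omega) (by omega) hco

lemma not_repr_and_repr_sub (hco : r.Coprime s) (hr : 0 < r) (hs : 0 < s) (n : ℤ) :
    ¬ ((∃ a b : ℕ, (a * r + b * s : ℤ) = n) ∧
      ∃ a b : ℕ, (a * r + b * s : ℤ) = r * s - r - s - n) := by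
  rintro ⟨⟨a₁, b₁, h₁⟩, ⟨a₂, b₂, h₂⟩⟩
  have hsum : (a₁ + a₂ + 1) * r + (b₁ + b₂ + 1) * s = r * s := by
    have : ((a₁ + a₂ + 1) * r + (b₁ + b₂ + 1) * s : ℤ) = r * s := by linear_combination h₁ + h₂
    exact_mod_cast this
  have hsa : s ≤ a₁ + a₂ + 1 := by
    refine Nat.le_of_dvd (by omega) (hco.symm.dvd_of_dvd_mul_right ?_)
    have : s ∣ (a₁ + a₂ + 1) * r + (b₁ + b₂ + 1) * s := hsum ▸ Nat.dvd_mul_left s r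
    exact (Nat.dvd_add_left (Nat.dvd_mul_left s _)).1 this
  have hrb : r ≤ b₁ + b₂ + 1 := by
    refine Nat.le_of_dvd (by omega) (hco.dvd_of_dvd_mul_right ?_)
    have : r ∣ (a₁ + a₂ + 1) * r + (b₁ + b₂ + 1) * s := hsum ▸ Nat.dvd_mul_right r s
    exact (Nat.dvd_add_right (Nat.dvd_mul_left r _)).1 this
  nlinarith [Nat.mul_le_mul_right r hsa, Nat.mul_le_mul_right s hrb, Nat.mul_pos hr hs]

lemma repr_or_repr_sub (hco : r.Coprime s) (hs : 0 < s) (n : ℤ) :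
    (∃ a b : ℕ, (a * r + b * s : ℤ) = n) ∨
      ∃ a b : ℕ, (a * r + b * s : ℤ) = r * s - r - s - n := by
  obtain ⟨u, v, huv⟩ := Nat.isCoprime_iff_coprime.2 hco
  have hs' : (0 : ℤ) < s := by exact_mod_cast hs
  -- `a r ≡ n u r ≡ n (mod s)` since `u r + v s = 1`
  set a := n * u % s with ha
  have ha0 : 0 ≤ a := Int.emod_nonneg _ hs'.ne'
  have has : a < s := Int.emod_lt_of_pos _ hs'
  obtain ⟨q, hq⟩ : (s : ℤ) ∣ n - a * r :=
    ⟨n * v + n * u / s * r, by rw [ha, Int.emod_def]; linear_combination (-n) * huv⟩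
  rcases le_or_gt 0 q with hq0 | hq0
  · refine Or.inl ⟨a.toNat, q.toNat, ?_⟩
    rw [Int.toNat_of_nonneg ha0, Int.toNat_of_nonneg hq0]
    linear_combination -hq
  · refine Or.inr ⟨(s - 1 - a).toNat, (-1 - q).toNat, ?_⟩
    rw [Int.toNat_of_nonneg (by omega), Int.toNat_of_nonneg (by omega)]
    linear_combination hq

lemma isSymmetricBelow_repr (hco : r.Coprime s) (hr : 0 < r) (hs : 0 < s) :
    IsSymmetricBelow (fun n => ∃ a b : ℕ, a * r + b * s = n) ((r - 1) * (s - 1)) := by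
  intro m hm
  have hcast : (((r - 1) * (s - 1) - 1 - m : ℕ) : ℤ) = r * s - r - s - m := by
    rw [Nat.cast_sub (by omega), Nat.cast_sub (by omega), Nat.cast_mul,
      Nat.cast_sub hr, Nat.cast_sub hs]
    ring
  have hint : ∀ k : ℕ, (∃ a b : ℕ, a * r + b * s = k) ↔ ∃ a b : ℕ, (a * r + b * s : ℤ) = k := by
    intro k; norm_cast
  dsimp only
  rw [hint, hint, hcast]
  exact ⟨fun h₁ h₂ => not_repr_and_repr_sub hco hr hs m ⟨h₁, h₂⟩,
    (repr_or_repr_sub hco hs m).resolve_right⟩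

end Nat.Coprime

/-- The partition `Λ` attached to the `(r,s)` numerical semigroup is
self-conjugate: `Λ'_j = Λ_j` for all `1 ≤ j ≤ g`, where the conjugate
partition is `Λ'_j = #{i : Λ_i ≥ j}` (parts `Λ_i` with `i > g` being zero). -/
theorem semigroup_partition_self_conjugate (r s : ℕ) (hr : 1 < r) (hrs : r < s)
    (hco : Nat.Coprime r s) (g : ℕ) (hg : g = (r - 1) * (s - 1) / 2)
    (N : ℕ → ℕ) (hN : N = Nat.nth (fun n => ∃ a b : ℕ, a * r + b * s = n))
    (Λ : ℕ → ℤ) (hΛ : ∀ i : ℕ, Λ i = (g : ℤ) - (N (i - 1) : ℤ) + ((i : ℤ) - 1)) :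
    ∀ j : ℕ, 1 ≤ j → j ≤ g →
      ((((Finset.Icc 1 g).filter (fun i => (j : ℤ) ≤ Λ i)).card : ℤ)) = Λ j := by
  classical
  intro j hj hjg
  set p : ℕ → Prop := fun n => ∃ a b : ℕ, a * r + b * s = n
  have hsym : IsSymmetricBelow p (2 * g) := by
    rw [hg, Nat.two_mul_div_two_of_even hco.even_sub_one_mul_sub_one]
    exact hco.isSymmetricBelow_repr (by omega) (by omega)
  have hinf : {n | p n}.Infinite :=
    Set.infinite_of_injective_forall_mem (mul_left_injective₀ (by omega : r ≠ 0))
      fun n => ⟨n, 0, by simp⟩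
  subst hN
  have hjle : j - 1 ≤ Nat.nth p (j - 1) := Nat.le_nth fun hf => absurd hf hinf
  have hNle := hsym.nth_le_add hinf (k := j - 1) (by omega)
  have hfilter : (Icc 1 g).filter (fun i => (j : ℤ) ≤ Λ i) =
      Icc 1 (g + (j - 1) - Nat.nth p (j - 1)) := by
    ext i
    simp only [mem_filter, mem_Icc, hΛ]
    constructor
    · rintro ⟨⟨hi, hig⟩, hji⟩
      have := (hsym.add_nth_lt_comm hinf (k := i - 1) (l := j - 1) (by omega) (by omega)).1
        (by omega)
      omega
    · rintro ⟨hi, hij⟩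
      have := (hsym.add_nth_lt_comm hinf (k := j - 1) (l := i - 1) (by omega) (by omega)).1
        (by omega)
      omega
  rw [hfilter, Nat.card_Icc, hΛ j]
  omega
end
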